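/- arXiv:1701.08372 — 6 statements merged into one kernel-verified Lean document; each statement's English description precedes it below -/
import Mathlib

section
/- Let k be an algebraically closed field and n ≥ 1. Let f, g ∈ k[x₁,…,xₙ] be polynomials and set F := w·g + f ∈ k[x₁,…,xₙ,w]. Assume that for every point q ∈ kⁿ with f(q) = g(q) = 0, the 2×n Jacobian matrix with rows (∂f/∂x₁(q),…,∂f/∂xₙ(q)) and (∂g/∂x₁(q),…,∂g/∂xₙ(q)) has rank 2. Then the hypersurface F = 0 in affine (n+1)-space is nonsingular: for every (q,β) ∈ kⁿ × k with F(q,β) = 0, at least one of the partial derivatives ∂F/∂x₁,…,∂F/∂xₙ, ∂F/∂w is nonzero at (q,β). -/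
open MvPolynomial

/-!
At a singular point `(q, β)` of `F = w·g + f`, the derivative `∂F/∂w = g` vanishes, so `F = 0`
forces `f(q) = 0`; the remaining equations `β ∂g/∂xᵢ + ∂f/∂xᵢ = 0` say that the two rows of the
Jacobian of `(f, g)` at `q` are proportional, so it has rank at most one.
-/

theorem Matrix.rank_le_one_of_row_zero_eq_smul {n R : Type*} [Fintype n] [CommSemiring R]
    [StrongRankCondition R] (M : Matrix (Fin 2) n R) (c : R) (h : M 0 = c • M 1) :
    M.rank ≤ 1 := by
  have hM : M = vecMulVec ![c, 1] (M 1) := by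
    ext r i
    fin_cases r
    · simp [vecMulVec_apply, h]
    · simp [vecMulVec_apply]
  rw [hM]
  exact rank_vecMulVec_le _ _

namespace MvPolynomial

variable {σ τ R : Type*} [CommSemiring R]

theorem eval_sumElim_rename_inl (x : σ → R) (y : τ → R) (p : MvPolynomial σ R) :
    eval (Sum.elim x y) (rename Sum.inl p) = eval x p := by
  rw [eval_rename, Sum.elim_comp_inl]

theorem pderiv_inr_rename_inl (j : τ) (p : MvPolynomial σ R) :
    pderiv (Sum.inr j) (rename (Sum.inl : σ → σ ⊕ τ) p) = 0 := by
  apply pderiv_eq_zero_of_notMem_vars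
  intro h
  obtain ⟨i, -, hi⟩ := mem_vars_rename _ _ h
  exact Sum.inl_ne_inr hi

variable (f g : MvPolynomial σ R) (j : τ)

theorem pderiv_inr_X_mul_rename_add_rename :
    pderiv (Sum.inr j) (X (Sum.inr j) * rename Sum.inl g + rename Sum.inl f) =
      rename Sum.inl g := by
  simp [Derivation.leibniz, pderiv_inr_rename_inl]

theorem pderiv_inl_X_mul_rename_add_rename (i : σ) :
    pderiv (Sum.inl i) (X (Sum.inr j) * rename Sum.inl g + rename Sum.inl f) =
      X (Sum.inr j) * rename Sum.inl (pderiv i g) + rename Sum.inl (pderiv i f) := by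
  simp [Derivation.leibniz, pderiv_rename Sum.inl_injective]

end MvPolynomial

theorem hypersurface_wg_add_f_nonsingular_general
    {k : Type*} [Field k] {n : ℕ}
    (f g : MvPolynomial (Fin n) k)
    (F : MvPolynomial (Fin n ⊕ Unit) k)
    (hF : F = X (Sum.inr ()) * rename Sum.inl g + rename Sum.inl f)
    (hJ : ∀ q : Fin n → k, eval q f = 0 → eval q g = 0 →
      (Matrix.of fun r : Fin 2 => fun i : Fin n =>
        if r = 0 then eval q (pderiv i f) else eval q (pderiv i g)).rank = 2) :
    ∀ (q : Fin n → k) (β : k),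
      eval (Sum.elim q fun _ : Unit => β) F = 0 →
      ∃ v : Fin n ⊕ Unit, eval (Sum.elim q fun _ : Unit => β) (pderiv v F) ≠ 0 := by
  subst hF
  intro q β hzero
  by_contra! hsing
  have hg : eval q g = 0 := by
    simpa [pderiv_inr_X_mul_rename_add_rename, eval_sumElim_rename_inl] using hsing (Sum.inr ())
  have hf : eval q f = 0 := by
    simpa [eval_sumElim_rename_inl, hg] using hzero
  have hgrad (i : Fin n) : eval q (pderiv i f) = -β * eval q (pderiv i g) := by
    have hxi := hsing (Sum.inl i)
    rw [pderiv_inl_X_mul_rename_add_rename] at hxi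
    simp only [map_add, map_mul, eval_X, Sum.elim_inr, eval_sumElim_rename_inl] at hxi
    linear_combination hxi
  have hrank := (Matrix.of fun r : Fin 2 => fun i : Fin n =>
    if r = 0 then eval q (pderiv i f) else eval q (pderiv i g)).rank_le_one_of_row_zero_eq_smul
      (-β) (by ext i; simp [hgrad])
  have hrank_eq := hJ q hf hg
  omega

/-- Lemma 3.7: if the affine complete intersection `f = g = 0` is nonsingular
(the 2×n Jacobian has rank 2 at every common zero), then the hypersurface
`F = w·g + f = 0` in affine (n+1)-space is nonsingular. -/
theorem hypersurface_wg_add_f_nonsingular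
    {k : Type*} [Field k] [IsAlgClosed k] {n : ℕ} (hn : 1 ≤ n)
    (f g : MvPolynomial (Fin n) k)
    (F : MvPolynomial (Fin n ⊕ Unit) k)
    (hF : F = X (Sum.inr ()) * rename Sum.inl g + rename Sum.inl f)
    (hJ : ∀ q : Fin n → k, eval q f = 0 → eval q g = 0 →
      (Matrix.of fun r : Fin 2 => fun i : Fin n =>
        if r = 0 then eval q (pderiv i f) else eval q (pderiv i g)).rank = 2) :
    ∀ (q : Fin n → k) (β : k),
      eval (Sum.elim q fun _ : Unit => β) F = 0 →
      ∃ v : Fin n ⊕ Unit, eval (Sum.elim q fun _ : Unit => β) (pderiv v F) ≠ 0 :=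
  hypersurface_wg_add_f_nonsingular_general f g F hF hJ
end

section
/- Let k be an algebraically closed field, n ≥ 1, m ≥ 1, λ ≥ 0, μ ≥ 0, δ, d integers. Give the polynomial ring S = k[u₀,…,uₙ,x,y,z] the ℕ×ℕ-valued weighting with weight (1,0) on each uᵢ, (0,1) on x, (λ,1) on y and (μ,m) on z, and let V(δ,d) ⊆ S be the k-subspace of polynomials that are weighted homogeneous of weight (δ,d). Assume d ≥ 3m, δ ≥ 2, δ ≥ 2λ and δ ≥ 2μ. Then for every a = (a₁,…,aₙ) ∈ kⁿ and every b, c ∈ k, the k-linear map V(δ,d) → k[u₁,…,uₙ,y,z]/(u₁,…,uₙ,y,z)³ sending f to the residue class of f(1, u₁+a₁, …, uₙ+aₙ, 1, y+b, z+c) is surjective. (This is the chart form of Lemma 3.8(1): the third restriction map r₃(p) of O_Q(δ,d) is surjective at every point p of the open set Uₓ = (x ≠ 0) of the P(1,1,m)-bundle Q over Pⁿ.) -/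
open MvPolynomial

/-!
In the chart `u₀ = x = 1` centred at `(a, b, c)`, the chart coordinates lift to the bihomogeneous
forms `uᵢ - aᵢ u₀`, `y - b u₀^λ x` and `z - c u₀^μ x^m`, of bidegrees `(1,0)`, `(λ,1)` and `(μ,m)`.
A product of at most two of them has bidegree at most `(δ, d)` because `δ ≥ 2, 2λ, 2μ` and
`d ≥ 2m ≥ 2`, so padding it with `u₀^α x^β` gives a section of `O_Q(δ,d)` restricting to the
corresponding monomial. These monomials span the jets of order `< 3`.
-/

theorem Finsupp.weight_le_of_degree_le {τ : Type*} {W : τ → ℕ × ℕ} {e : τ →₀ ℕ} {N : ℕ}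
    {D : ℕ × ℕ} (he : e.degree ≤ N) (hW : ∀ v, N • W v ≤ D) : e.weight W ≤ D := by
  rcases Nat.eq_zero_or_pos N with rfl | hN
  · rw [(degree_eq_zero_iff e).1 (Nat.le_zero.1 he), map_zero]
    exact bot_le
  have key : N • e.weight W ≤ N • D :=
    calc N • e.weight W = ∑ v ∈ e.support, e v • N • W v := by
          rw [weight_apply, Finsupp.sum, Finset.smul_sum]
          exact Finset.sum_congr rfl fun v _ => smul_comm _ _ _
      _ ≤ ∑ v ∈ e.support, e v • D :=
          Finset.sum_le_sum fun v _ => nsmul_le_nsmul_right (hW v) _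
      _ = e.degree • D := by rw [degree_apply, Finset.sum_smul]
      _ ≤ N • D := nsmul_le_nsmul_left bot_le he
  exact ⟨Nat.le_of_mul_le_mul_left key.1 hN, Nat.le_of_mul_le_mul_left key.2 hN⟩

namespace MvPolynomial

variable {σ τ R : Type*}

section CommSemiring

variable [CommSemiring R]

theorem isWeightedHomogeneous_finsuppProd_pow {M : Type*} [AddCommMonoid M] {w : σ → M}
    {g : τ → MvPolynomial σ R} {W : τ → M} (hg : ∀ v, IsWeightedHomogeneous w (g v) (W v))
    (e : τ →₀ ℕ) : IsWeightedHomogeneous w (e.prod fun v c => g v ^ c) (e.weight W) :=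
  IsWeightedHomogeneous.prod _ _ _ fun v _ => (hg v).pow (e v)

theorem aeval_finsuppProd_pow {S : σ → MvPolynomial τ R} {g : τ → MvPolynomial σ R}
    (hg : ∀ v, aeval S (g v) = X v) (e : τ →₀ ℕ) :
    aeval S (e.prod fun v c => g v ^ c) = monomial e 1 := by
  rw [map_finsuppProd, ← prod_X_pow_eq_monomial]
  exact Finset.prod_congr rfl fun v _ => by dsimp only; rw [map_pow, hg]

noncomputable def bidegreeMonomial (i j : σ) (p : ℕ × ℕ) : MvPolynomial σ R := X i ^ p.1 * X j ^ p.2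

theorem isWeightedHomogeneous_bidegreeMonomial {w : σ → ℕ × ℕ} {i j : σ} (hi : w i = (1, 0))
    (hj : w j = (0, 1)) (p : ℕ × ℕ) :
    IsWeightedHomogeneous w (bidegreeMonomial i j p : MvPolynomial σ R) p := by
  have h := ((isWeightedHomogeneous_X R w i).pow p.1).mul ((isWeightedHomogeneous_X R w j).pow p.2)
  rw [hi, hj] at h
  simpa [bidegreeMonomial] using h

theorem aeval_bidegreeMonomial {A : Type*} [CommSemiring A] [Algebra R A] {S : σ → A} {i j : σ}
    (hi : S i = 1) (hj : S j = 1) (p : ℕ × ℕ) :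
    aeval S (bidegreeMonomial i j p : MvPolynomial σ R) = 1 := by
  simp [bidegreeMonomial, hi, hj]

end CommSemiring

section CommRing

variable [CommRing R]

theorem exists_isWeightedHomogeneous_mk_pow_idealOfVars_eq {M : Type*} [AddCommMonoid M]
    {w : σ → M} {D : M} {N : ℕ} (φ : MvPolynomial σ R →ₐ[R] MvPolynomial τ R)
    (hlift : ∀ e : τ →₀ ℕ, e.degree < N → ∃ f, IsWeightedHomogeneous w f D ∧ φ f = monomial e 1)
    (t : MvPolynomial τ R) :
    ∃ f, IsWeightedHomogeneous w f D ∧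
      Ideal.Quotient.mk (idealOfVars τ R ^ N) (φ f) = Ideal.Quotient.mk _ t := by
  induction t using MvPolynomial.induction_on' with
  | monomial e r =>
    by_cases he : e.degree < N
    · obtain ⟨f, hf, hφf⟩ := hlift e he
      refine ⟨C r * f, hf.C_mul r, ?_⟩
      rw [map_mul, hφf, algHom_C, algebraMap_eq, C_mul_monomial, mul_one]
    · refine ⟨0, isWeightedHomogeneous_zero R w D, ?_⟩
      rw [map_zero, map_zero, eq_comm, Ideal.Quotient.eq_zero_iff_mem,
        mem_pow_idealOfVars_iff]
      intro x hx
      rw [Finset.mem_coe.mp (support_monomial_subset hx) |> Finset.mem_singleton.mp]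
      omega
  | add p q hp hq =>
    obtain ⟨f, hf, hφf⟩ := hp
    obtain ⟨g, hg, hφg⟩ := hq
    exact ⟨f + g, hf.add hg, by rw [map_add, map_add, hφf, hφg, map_add]⟩

noncomputable def centeredCoordinate (w : σ → ℕ × ℕ) (i j : σ) (s : τ → σ) (p : τ → R) (v : τ) :
    MvPolynomial σ R :=
  X (s v) - C (p v) * bidegreeMonomial i j (w (s v))

theorem isWeightedHomogeneous_centeredCoordinate {w : σ → ℕ × ℕ} {i j : σ} (hi : w i = (1, 0))
    (hj : w j = (0, 1)) (s : τ → σ) (p : τ → R) (v : τ) :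
    IsWeightedHomogeneous w (centeredCoordinate w i j s p v) (w (s v)) :=
  (isWeightedHomogeneous_X R w (s v)).sub
    ((isWeightedHomogeneous_bidegreeMonomial hi hj _).C_mul _)

theorem aeval_centeredCoordinate {w : σ → ℕ × ℕ} {i j : σ} {S : σ → MvPolynomial τ R}
    (hi : S i = 1) (hj : S j = 1) {s : τ → σ} {p : τ → R} (hS : ∀ v, S (s v) = X v + C (p v))
    (v : τ) : aeval S (centeredCoordinate w i j s p v) = X v := by
  rw [centeredCoordinate, map_sub, map_mul, aeval_bidegreeMonomial hi hj, aeval_X, aeval_C, hS,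
    algebraMap_eq, mul_one, add_sub_cancel_right]

theorem exists_isWeightedHomogeneous_aeval_eq_monomial {w : σ → ℕ × ℕ} {i j : σ}
    (hi : w i = (1, 0)) (hj : w j = (0, 1)) {S : σ → MvPolynomial τ R} (hSi : S i = 1)
    (hSj : S j = 1) (s : τ → σ) (p : τ → R) (hS : ∀ v, S (s v) = X v + C (p v))
    {e : τ →₀ ℕ} {D : ℕ × ℕ} (he : e.weight (w ∘ s) ≤ D) :
    ∃ f : MvPolynomial σ R, IsWeightedHomogeneous w f D ∧ aeval S f = monomial e 1 := by
  refine ⟨bidegreeMonomial i j (D - e.weight (w ∘ s)) *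
    e.prod fun v c => centeredCoordinate w i j s p v ^ c, ?_, ?_⟩
  · have h := (isWeightedHomogeneous_bidegreeMonomial hi hj (D - e.weight (w ∘ s))).mul
      (isWeightedHomogeneous_finsuppProd_pow (W := w ∘ s)
        (isWeightedHomogeneous_centeredCoordinate hi hj s p) e)
    rwa [tsub_add_cancel_of_le he] at h
  · rw [map_mul, aeval_bidegreeMonomial hSi hSj, one_mul,
      aeval_finsuppProd_pow (aeval_centeredCoordinate hSi hSj hS)]

end CommRing

end MvPolynomial

theorem third_restriction_map_surjective_on_Ux_general
    {k : Type*} [Field k]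
    {n m lam μ : ℕ} (hm : 1 ≤ m)
    (δ d : ℕ) (hd : 3 * m ≤ d) (hδ1 : 2 ≤ δ) (hδ2 : 2 * lam ≤ δ) (hδ3 : 2 * μ ≤ δ)
    -- the bigrading: `uᵢ ↦ (1,0)`, `x ↦ (0,1)`, `y ↦ (λ,1)`, `z ↦ (μ,m)`
    (w : Fin (n + 1) ⊕ Fin 3 → ℕ × ℕ)
    (hw : w = Sum.elim (fun _ => (1, 0)) ![(0, 1), (lam, 1), (μ, m)])
    (a : Fin n → k) (b c : k) :
    ∀ t : MvPolynomial (Fin n ⊕ Fin 2) k,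
      ∃ f : MvPolynomial (Fin (n + 1) ⊕ Fin 3) k,
        IsWeightedHomogeneous w f (δ, d) ∧
        Ideal.Quotient.mk
            ((Ideal.span (Set.range (X : Fin n ⊕ Fin 2 → MvPolynomial (Fin n ⊕ Fin 2) k))) ^ 3)
            (aeval
              (Sum.elim
                (fun i : Fin (n + 1) =>
                  Fin.cases 1 (fun j : Fin n => X (Sum.inl j) + C (a j)) i)
                ![1, X (Sum.inr 0) + C b, X (Sum.inr 1) + C c]) f) =
          Ideal.Quotient.mk _ t := by
  subst hw
  intro t
  refine exists_isWeightedHomogeneous_mk_pow_idealOfVars_eq _ (fun e he => ?_) t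
  refine exists_isWeightedHomogeneous_aeval_eq_monomial (i := Sum.inl 0) (j := Sum.inr 0)
    rfl rfl rfl rfl (Sum.elim (fun i => Sum.inl i.succ) ![Sum.inr 1, Sum.inr 2])
    (Sum.elim a ![b, c]) ?_ (Finsupp.weight_le_of_degree_le (N := 2) (by omega) ?_)
  · rintro (i | j)
    · simp
    · fin_cases j <;> simp
  · rintro (i | j)
    · simpa [Prod.le_def] using hδ1
    · fin_cases j <;> simp [Prod.le_def] <;> omega

/-- Lemma 3.8(1), chart form: on the `P(1,1,m)`-bundle `Q` over `Pⁿ` with Cox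
coordinates `u₀,…,uₙ,x,y,z` of bidegrees `(1,0),…,(1,0),(0,1),(λ,1),(μ,m)`, if
`d ≥ 3m`, `δ ≥ 2`, `δ ≥ 2λ` and `δ ≥ 2μ`, then the third restriction map
`r₃(p) : H⁰(Q, O_Q(δ,d)) → O_Q(δ,d) ⊗ (O_Q/m_p³)` is surjective at every point
`p` of `Uₓ = (x ≠ 0)`, written in the chart `u₀ ≠ 0`, `x ≠ 0` with chart
coordinates `u₁,…,uₙ,y,z`. -/
theorem third_restriction_map_surjective_on_Ux
    {k : Type*} [Field k] [IsAlgClosed k]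
    {n m lam μ : ℕ} (hn : 1 ≤ n) (hm : 1 ≤ m)
    (δ d : ℕ) (hd : 3 * m ≤ d) (hδ1 : 2 ≤ δ) (hδ2 : 2 * lam ≤ δ) (hδ3 : 2 * μ ≤ δ)
    -- the bigrading: `uᵢ ↦ (1,0)`, `x ↦ (0,1)`, `y ↦ (λ,1)`, `z ↦ (μ,m)`
    (w : Fin (n + 1) ⊕ Fin 3 → ℕ × ℕ)
    (hw : w = Sum.elim (fun _ => (1, 0)) ![(0, 1), (lam, 1), (μ, m)])
    (a : Fin n → k) (b c : k) :
    ∀ t : MvPolynomial (Fin n ⊕ Fin 2) k,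
      ∃ f : MvPolynomial (Fin (n + 1) ⊕ Fin 3) k,
        IsWeightedHomogeneous w f (δ, d) ∧
        Ideal.Quotient.mk
            ((Ideal.span (Set.range (X : Fin n ⊕ Fin 2 → MvPolynomial (Fin n ⊕ Fin 2) k))) ^ 3)
            (aeval
              (Sum.elim
                (fun i : Fin (n + 1) =>
                  Fin.cases 1 (fun j : Fin n => X (Sum.inl j) + C (a j)) i)
                ![1, X (Sum.inr 0) + C b, X (Sum.inr 1) + C c]) f) =
          Ideal.Quotient.mk _ t :=
  third_restriction_map_surjective_on_Ux_general hm δ d hd hδ1 hδ2 hδ3 w hw a b c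
end

section
/- Let k be an algebraically closed field, n ≥ 1, m ≥ 1, λ ≥ 0, μ ≥ 0, δ, d integers. Give the polynomial ring S = k[u₀,…,uₙ,x,y,z] the ℕ×ℕ-valued weighting with weight (1,0) on each uᵢ, (0,1) on x, (λ,1) on y and (μ,m) on z, and let V(δ,d) ⊆ S be the k-subspace of polynomials that are weighted homogeneous of weight (δ,d). Assume d ≥ 3m, μ ≥ mλ, δ ≥ dλ + 1 and δ ≥ (d−m)λ + μ. Then for every a = (a₁,…,aₙ) ∈ kⁿ and every c ∈ k, the k-linear map V(δ,d) → k[u₁,…,uₙ,x,z]/(u₁,…,uₙ,x,z)² sending f to the residue class of f(1, u₁+a₁, …, uₙ+aₙ, x, 1, z+c) is surjective. (This is the chart form of Lemma 3.8(3): the second restriction map r₂(p) of O_Q(δ,d) is surjective at every point p of Π_y = (x = 0) ∩ (y ≠ 0).) -/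
open MvPolynomial

private theorem aux_isWeightedHomogeneous_X_pow {σ R M : Type*} [CommSemiring R]
    [AddCommMonoid M] (w : σ → M) (i : σ) (e : ℕ) :
    IsWeightedHomogeneous w ((X i : MvPolynomial σ R) ^ e) (e • w i) := by
  induction e with
  | zero => simpa using isWeightedHomogeneous_one R w
  | succ e ih =>
    rw [pow_succ, succ_nsmul]
    exact ih.mul (isWeightedHomogeneous_X R w i)

private theorem aux_sub_C_mem_span_range_X {σ R : Type*} [CommRing R]
    (p : MvPolynomial σ R) :
    p - C (coeff 0 p) ∈ Ideal.span (Set.range (X : σ → MvPolynomial σ R)) := by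
  rw [← Set.image_univ, mem_ideal_span_X_image]
  intro mm hmm
  by_contra hcon
  push_neg at hcon
  have hmm0 : mm = 0 := by
    ext i
    simpa using hcon i (Set.mem_univ i)
  rw [hmm0, mem_support_iff] at hmm
  simp at hmm

set_option maxHeartbeats 1000000 in
set_option synthInstance.maxHeartbeats 400000 in
/-- Lemma 3.8(3), chart form: on the `P(1,1,m)`-bundle `Q` over `Pⁿ` with Cox
coordinates `u₀,…,uₙ,x,y,z` of bidegrees `(1,0),…,(1,0),(0,1),(λ,1),(μ,m)`, if
`d ≥ 3m`, `μ ≥ mλ`, `δ ≥ dλ + 1` and `δ ≥ (d−m)λ + μ`, then the second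
restriction map `r₂(p) : H⁰(Q, O_Q(δ,d)) → O_Q(δ,d) ⊗ (O_Q/m_p²)` is surjective
at every point `p` of `Π_y = (x = 0) ∩ (y ≠ 0)`, written in the chart `u₀ ≠ 0`,
`y ≠ 0` with chart coordinates `u₁,…,uₙ,x,z`. -/
theorem second_restriction_map_surjective_on_Piy
    {k : Type*} [Field k] [IsAlgClosed k]
    {n m lam μ : ℕ} (hn : 1 ≤ n) (hm : 1 ≤ m)
    (δ d : ℕ) (hd : 3 * m ≤ d) (hμ : m * lam ≤ μ)
    (hδ1 : d * lam + 1 ≤ δ) (hδ2 : (d - m) * lam + μ ≤ δ)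
    -- the bigrading: `uᵢ ↦ (1,0)`, `x ↦ (0,1)`, `y ↦ (λ,1)`, `z ↦ (μ,m)`
    (w : Fin (n + 1) ⊕ Fin 3 → ℕ × ℕ)
    (hw : w = Sum.elim (fun _ => (1, 0)) ![(0, 1), (lam, 1), (μ, m)])
    (a : Fin n → k) (c : k) :
    ∀ t : MvPolynomial (Fin n ⊕ Fin 2) k,
      ∃ f : MvPolynomial (Fin (n + 1) ⊕ Fin 3) k,
        IsWeightedHomogeneous w f (δ, d) ∧
        Ideal.Quotient.mk
            ((Ideal.span (Set.range (X : Fin n ⊕ Fin 2 → MvPolynomial (Fin n ⊕ Fin 2) k))) ^ 2)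
            (aeval
              (Sum.elim
                (fun i : Fin (n + 1) =>
                  Fin.cases 1 (fun j : Fin n => X (Sum.inl j) + C (a j)) i)
                ![X (Sum.inr 0), 1, X (Sum.inr 1) + C c]) f) =
          Ideal.Quotient.mk _ t := by
  classical
  intro t
  set I : Ideal (MvPolynomial (Fin n ⊕ Fin 2) k) :=
    Ideal.span (Set.range (X : Fin n ⊕ Fin 2 → MvPolynomial (Fin n ⊕ Fin 2) k)) with hI
  set σv : Fin (n + 1) ⊕ Fin 3 → MvPolynomial (Fin n ⊕ Fin 2) k :=
    Sum.elim
      (fun i : Fin (n + 1) =>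
        Fin.cases 1 (fun j : Fin n => X (Sum.inl j) + C (a j)) i)
      ![X (Sum.inr 0), 1, X (Sum.inr 1) + C c] with hσv
  -- facts about the weights
  have hw0 : w (Sum.inl 0) = (1, 0) := by rw [hw]; rfl
  have hwx : w (Sum.inr 0) = (0, 1) := by rw [hw]; rfl
  have hwy : w (Sum.inr 1) = (lam, 1) := by rw [hw]; rfl
  have hwz : w (Sum.inr 2) = (μ, m) := by rw [hw]; rfl
  have hwu : ∀ i : Fin (n + 1), w (Sum.inl i) = (1, 0) := by intro i; rw [hw]; rfl
  -- the linear restriction map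
  set L : MvPolynomial (Fin (n + 1) ⊕ Fin 3) k →ₗ[k]
      (MvPolynomial (Fin n ⊕ Fin 2) k ⧸ I ^ 2) :=
    ((Ideal.Quotient.mkₐ k (I ^ 2)).comp (aeval σv)).toLinearMap with hL
  set Im : Submodule k (MvPolynomial (Fin n ⊕ Fin 2) k ⧸ I ^ 2) :=
    Submodule.map L (weightedHomogeneousSubmodule k w (δ, d)) with hIm
  -- smul lemma
  have hsmul : ∀ (r : k) (s : MvPolynomial (Fin n ⊕ Fin 2) k),
      Ideal.Quotient.mk (I ^ 2) (C r * s) = r • Ideal.Quotient.mk (I ^ 2) s := by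
    intro r s
    rw [← smul_eq_C_mul, ← Ideal.Quotient.mkₐ_eq_mk k, map_smul, Ideal.Quotient.mkₐ_eq_mk]
  -- generator: 1
  have hgen1 : Ideal.Quotient.mk (I ^ 2) 1 ∈ Im := by
    refine ⟨X (Sum.inl 0) ^ (δ - d * lam) * X (Sum.inr 1) ^ d, ?_, ?_⟩
    · have key := (aux_isWeightedHomogeneous_X_pow (R := k) w (Sum.inl 0) (δ - d * lam)).mul
        (aux_isWeightedHomogeneous_X_pow (R := k) w (Sum.inr 1) d)
      have heq : (δ - d * lam) • w (Sum.inl 0) + d • w (Sum.inr 1) = (δ, d) := by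
        rw [hw0, hwy]
        have h1 : d * lam ≤ δ := by omega
        simp [Prod.smul_mk, Prod.ext_iff, smul_eq_mul]
        omega
      rw [heq] at key; exact key
    · simp [hL, hσv, Ideal.Quotient.mkₐ_eq_mk]
  -- generator: x
  have hgenx : Ideal.Quotient.mk (I ^ 2) (X (Sum.inr 0)) ∈ Im := by
    refine ⟨X (Sum.inl 0) ^ (δ - (d - 1) * lam) * X (Sum.inr 0) * X (Sum.inr 1) ^ (d - 1),
      ?_, ?_⟩
    · have key := ((aux_isWeightedHomogeneous_X_pow (R := k) w (Sum.inl 0)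
          (δ - (d - 1) * lam)).mul (isWeightedHomogeneous_X k w (Sum.inr 0))).mul
        (aux_isWeightedHomogeneous_X_pow (R := k) w (Sum.inr 1) (d - 1))
      have heq : ((δ - (d - 1) * lam) • w (Sum.inl 0) + w (Sum.inr 0)) + (d - 1) • w (Sum.inr 1)
          = (δ, d) := by
        rw [hw0, hwx, hwy]
        have h1 : (d - 1) * lam ≤ d * lam := Nat.mul_le_mul_right lam (Nat.sub_le d 1)
        simp [Prod.smul_mk, Prod.ext_iff, smul_eq_mul]
        omega
      rw [heq] at key; exact key
    · simp [hL, hσv, Ideal.Quotient.mkₐ_eq_mk]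
  -- generator: uⱼ (up to constant)
  have hgenu : ∀ j : Fin n,
      Ideal.Quotient.mk (I ^ 2) (X (Sum.inl j) + C (a j)) ∈ Im := by
    intro j
    refine ⟨X (Sum.inl 0) ^ (δ - d * lam - 1) * X (Sum.inl j.succ) * X (Sum.inr 1) ^ d,
      ?_, ?_⟩
    · have key := ((aux_isWeightedHomogeneous_X_pow (R := k) w (Sum.inl 0)
          (δ - d * lam - 1)).mul (isWeightedHomogeneous_X k w (Sum.inl j.succ))).mul
        (aux_isWeightedHomogeneous_X_pow (R := k) w (Sum.inr 1) d)
      have heq : ((δ - d * lam - 1) • w (Sum.inl 0) + w (Sum.inl j.succ)) + d • w (Sum.inr 1)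
          = (δ, d) := by
        rw [hw0, hwu, hwy]
        simp [Prod.smul_mk, Prod.ext_iff, smul_eq_mul]
        omega
      rw [heq] at key; exact key
    · simp [hL, hσv, Ideal.Quotient.mkₐ_eq_mk]
  -- generator: z (up to constant)
  have hgenz : Ideal.Quotient.mk (I ^ 2) (X (Sum.inr 1) + C c) ∈ Im := by
    refine ⟨X (Sum.inl 0) ^ (δ - ((d - m) * lam + μ)) * X (Sum.inr 2) * X (Sum.inr 1) ^ (d - m),
      ?_, ?_⟩
    · have key := ((aux_isWeightedHomogeneous_X_pow (R := k) w (Sum.inl 0)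
          (δ - ((d - m) * lam + μ))).mul (isWeightedHomogeneous_X k w (Sum.inr 2))).mul
        (aux_isWeightedHomogeneous_X_pow (R := k) w (Sum.inr 1) (d - m))
      have heq : ((δ - ((d - m) * lam + μ)) • w (Sum.inl 0) + w (Sum.inr 2))
          + (d - m) • w (Sum.inr 1) = (δ, d) := by
        rw [hw0, hwz, hwy]
        simp [Prod.smul_mk, Prod.ext_iff, smul_eq_mul]
        omega
      rw [heq] at key; exact key
    · simp [hL, hσv, Ideal.Quotient.mkₐ_eq_mk]
  -- all variables are in the image
  have hXmem : ∀ v : Fin n ⊕ Fin 2, Ideal.Quotient.mk (I ^ 2) (X v) ∈ Im := by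
    intro v
    cases v with
    | inl j =>
      have heq : Ideal.Quotient.mk (I ^ 2) (X (Sum.inl j) : MvPolynomial (Fin n ⊕ Fin 2) k)
          = Ideal.Quotient.mk (I ^ 2) (X (Sum.inl j) + C (a j)) -
            a j • Ideal.Quotient.mk (I ^ 2) 1 := by
        rw [← hsmul, mul_one, ← map_sub, add_sub_cancel_right]
      rw [heq]
      exact Submodule.sub_mem _ (hgenu j) (Submodule.smul_mem _ _ hgen1)
    | inr i =>
      fin_cases i
      · exact hgenx
      · show Ideal.Quotient.mk (I ^ 2) (X (Sum.inr 1) : MvPolynomial (Fin n ⊕ Fin 2) k) ∈ Im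
        have heq : Ideal.Quotient.mk (I ^ 2) (X (Sum.inr 1) : MvPolynomial (Fin n ⊕ Fin 2) k)
            = Ideal.Quotient.mk (I ^ 2) (X (Sum.inr 1) + C c) -
              c • Ideal.Quotient.mk (I ^ 2) 1 := by
          rw [← hsmul, mul_one, ← map_sub, add_sub_cancel_right]
        rw [heq]
        exact Submodule.sub_mem _ hgenz (Submodule.smul_mem _ _ hgen1)
  -- every polynomial is in the image
  have hmain : ∀ s : MvPolynomial (Fin n ⊕ Fin 2) k,
      Ideal.Quotient.mk (I ^ 2) s ∈ Im := by
    intro s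
    induction s using MvPolynomial.induction_on with
    | C r =>
      have : (C r : MvPolynomial (Fin n ⊕ Fin 2) k) = C r * 1 := by rw [mul_one]
      rw [this, hsmul]
      exact Submodule.smul_mem _ _ hgen1
    | add p q hp hq =>
      rw [map_add]
      exact Submodule.add_mem _ hp hq
    | mul_X p v hp =>
      have h0 : p - C (coeff 0 p) ∈ I := by rw [hI]; exact aux_sub_C_mem_span_range_X p
      have h2 : (p - C (coeff 0 p)) * X v ∈ I ^ 2 := by
        rw [sq]
        exact Ideal.mul_mem_mul h0 (Ideal.subset_span ⟨v, rfl⟩)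
      have heq : Ideal.Quotient.mk (I ^ 2) (p * X v)
          = coeff 0 p • Ideal.Quotient.mk (I ^ 2) (X v) := by
        rw [← hsmul, Ideal.Quotient.eq, ← sub_mul]
        exact h2
      rw [heq]
      exact Submodule.smul_mem _ _ (hXmem v)
  obtain ⟨f, hf, hLf⟩ := hmain t
  refine ⟨f, (mem_weightedHomogeneousSubmodule (R := k) w (δ, d) f).mp hf, ?_⟩
  simpa [hL, hσv, Ideal.Quotient.mkₐ_eq_mk] using hLf
end

section
/- Let k be an algebraically closed field, n ≥ 1, λ ≥ 0, μ ≥ 0, δ, d integers, and take m = 1. Give the polynomial ring S = k[u₀,…,uₙ,x,y,z] the ℕ×ℕ-valued weighting with weight (1,0) on each uᵢ, (0,1) on x, (λ,1) on y and (μ,1) on z, and let V(δ,d) ⊆ S be the k-subspace of polynomials that are weighted homogeneous of weight (δ,d). Assume d ≥ 3, λ ≤ μ and δ ≥ dμ + 1. Then for every a = (a₁,…,aₙ) ∈ kⁿ, the k-linear map V(δ,d) → k[u₁,…,uₙ,x,y]/(u₁,…,uₙ,x,y)² sending f to the residue class of f(1, u₁+a₁, …, uₙ+aₙ, x, y, 1)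 is surjective. (This is the chart form of Lemma 3.8(4): when m = 1, the second restriction map r₂(p) of O_Q(δ,d) is surjective at every point p of Γ_z = (x = y = 0).) -/
/-!
In the chart `u₀ = z = 1` a form `u₀ᵉ · φ · zᶜ` restricts to the restriction of `φ`. Padding
with powers of `u₀` and `z` therefore shows that the restrictions of `V(δ,d)` contain `1`, `x`,
`y` and the chart coordinates, the latter as restrictions of `uⱼ - aⱼu₀`; the bounds `δ ≥ dμ + 1`
and `λ ≤ μ` keep the exponent of `u₀` nonnegative. A subspace containing `1` and all the
coordinates surjects onto `k[X]/(X)²`, because `p · Xᵢ ≡ p(0) · Xᵢ` modulo `(X)²`.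
-/

namespace MvPolynomial

variable {R σ : Type*} [CommRing R]

theorem sub_C_constantCoeff_mem_idealOfVars (p : MvPolynomial σ R) :
    p - C (constantCoeff p) ∈ idealOfVars σ R := by
  rw [← pow_one (idealOfVars σ R), mem_pow_idealOfVars_iff']
  intro x hx
  obtain rfl : x = 0 := (Finsupp.degree_eq_zero_iff x).1 (Nat.lt_one_iff.1 hx)
  simp [constantCoeff_eq]

theorem exists_mem_mk_idealOfVars_sq_eq (W : Submodule R (MvPolynomial σ R)) (h1 : 1 ∈ W)
    (hX : ∀ i, X i ∈ W) (t : MvPolynomial σ R) :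
    ∃ g ∈ W, Ideal.Quotient.mk (idealOfVars σ R ^ 2) g = Ideal.Quotient.mk _ t := by
  induction t using MvPolynomial.induction_on with
  | C c => exact ⟨c • 1, W.smul_mem c h1, by rw [smul_eq_C_mul, mul_one]⟩
  | add p q hp hq =>
    obtain ⟨f, hf, hfp⟩ := hp
    obtain ⟨g, hg, hgq⟩ := hq
    exact ⟨f + g, W.add_mem hf hg, by rw [map_add, map_add, hfp, hgq]⟩
  | mul_X p i _ =>
    refine ⟨constantCoeff p • X i, W.smul_mem _ (hX i), (Ideal.Quotient.eq.2 ?_).symm⟩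
    rw [smul_eq_C_mul, ← sub_mul, sq]
    exact Ideal.mul_mem_mul (sub_C_constantCoeff_mem_idealOfVars p) (Ideal.subset_span ⟨i, rfl⟩)

variable {S : Type*} [CommRing S] [Algebra R S] {w : σ → ℕ × ℕ} {u z : σ} {μ : ℕ}

theorem map_mem_map_weightedHomogeneousSubmodule (hu : w u = (1, 0)) (hz : w z = (μ, 1))
    (A : MvPolynomial σ R →ₐ[R] S) (hAu : A (X u) = 1) (hAz : A (X z) = 1)
    {φ : MvPolynomial σ R} {e d' c δ d : ℕ} (hφ : IsWeightedHomogeneous w φ (e, d'))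
    (hd : d' + c = d) (hδ : e + c * μ ≤ δ) :
    A φ ∈ (weightedHomogeneousSubmodule R w (δ, d)).map A.toLinearMap := by
  refine Submodule.mem_map.2 ⟨X u ^ (δ - (e + c * μ)) * φ * X z ^ c, ?_, by simp [hAu, hAz]⟩
  have h := (((isWeightedHomogeneous_X R w u).pow (δ - (e + c * μ))).mul hφ).mul
    ((isWeightedHomogeneous_X R w z).pow c)
  rw [hu, hz] at h
  rw [mem_weightedHomogeneousSubmodule]
  convert h using 1
  ext <;> simp <;> omega

end MvPolynomial

open MvPolynomial

theorem second_restriction_map_surjective_on_Gammaz_general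
    {k : Type*} [Field k]
    {n lam μ : ℕ}
    (δ d : ℕ) (hd : 3 ≤ d) (hlam : lam ≤ μ) (hδ : d * μ + 1 ≤ δ)
    -- the bigrading: `uᵢ ↦ (1,0)`, `x ↦ (0,1)`, `y ↦ (λ,1)`, `z ↦ (μ,1)`
    (w : Fin (n + 1) ⊕ Fin 3 → ℕ × ℕ)
    (hw : w = Sum.elim (fun _ => (1, 0)) ![(0, 1), (lam, 1), (μ, 1)])
    (a : Fin n → k) :
    ∀ t : MvPolynomial (Fin n ⊕ Fin 2) k,
      ∃ f : MvPolynomial (Fin (n + 1) ⊕ Fin 3) k,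
        IsWeightedHomogeneous w f (δ, d) ∧
        Ideal.Quotient.mk
            ((Ideal.span (Set.range (X : Fin n ⊕ Fin 2 → MvPolynomial (Fin n ⊕ Fin 2) k))) ^ 2)
            (aeval
              (Sum.elim
                (fun i : Fin (n + 1) =>
                  Fin.cases 1 (fun j : Fin n => X (Sum.inl j) + C (a j)) i)
                ![X (Sum.inr 0), X (Sum.inr 1), 1]) f) =
          Ideal.Quotient.mk _ t := by
  subst hw
  set w : Fin (n + 1) ⊕ Fin 3 → ℕ × ℕ := Sum.elim (fun _ => (1, 0)) ![(0, 1), (lam, 1), (μ, 1)]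
  set A : MvPolynomial (Fin (n + 1) ⊕ Fin 3) k →ₐ[k] MvPolynomial (Fin n ⊕ Fin 2) k :=
    aeval (Sum.elim (fun i => Fin.cases 1 (fun j => X (Sum.inl j) + C (a j)) i)
      ![X (Sum.inr 0), X (Sum.inr 1), 1]) with hA
  set W := (weightedHomogeneousSubmodule k w (δ, d)).map A.toLinearMap
  have mem {φ e d' c} (hφ : IsWeightedHomogeneous w φ (e, d')) (hc : d' + c = d)
      (he : e + c * μ ≤ δ) : A φ ∈ W :=
    map_mem_map_weightedHomogeneousSubmodule (u := Sum.inl 0) (z := Sum.inr 2) (μ := μ) rfl rfl A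
      (by simp [hA]) (by simp [hA]) hφ hc he
  have hXw i := isWeightedHomogeneous_X k w i
  have hdμ : (d - 1) * μ + μ = d * μ := by rw [← Nat.succ_mul]; congr 1; omega
  have h1 : 1 ∈ W := by
    simpa using mem (isWeightedHomogeneous_one k w) (c := d) (zero_add d) (by omega)
  have hX : ∀ i, X i ∈ W := by
    rintro (j | i)
    · simpa [hA] using mem ((hXw (Sum.inl j.succ)).sub ((hXw (Sum.inl 0)).C_mul (a j)))
        (c := d) (zero_add d) (by omega)
    · fin_cases i
      · simpa [hA] using mem (hXw (Sum.inr 0)) (c := d - 1) (by omega) (by omega)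
      · simpa [hA] using mem (hXw (Sum.inr 1)) (c := d - 1) (by omega) (by omega)
  intro t
  obtain ⟨_, ⟨f, hf, rfl⟩, hft⟩ := exists_mem_mk_idealOfVars_sq_eq W h1 hX t
  exact ⟨f, hf, hft⟩

/-- Lemma 3.8(4), chart form: on the `P(1,1,1)`-bundle `Q` over `Pⁿ` (case
`m = 1`) with Cox coordinates `u₀,…,uₙ,x,y,z` of bidegrees
`(1,0),…,(1,0),(0,1),(λ,1),(μ,1)`, if `d ≥ 3`, `λ ≤ μ` and `δ ≥ dμ + 1`, then
the second restriction map `r₂(p) : H⁰(Q, O_Q(δ,d)) → O_Q(δ,d) ⊗ (O_Q/m_p²)` is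
surjective at every point `p` of `Γ_z = (x = y = 0)`, written in the chart
`u₀ ≠ 0`, `z ≠ 0` with chart coordinates `u₁,…,uₙ,x,y`. -/
theorem second_restriction_map_surjective_on_Gammaz
    {k : Type*} [Field k] [IsAlgClosed k]
    {n lam μ : ℕ} (hn : 1 ≤ n)
    (δ d : ℕ) (hd : 3 ≤ d) (hlam : lam ≤ μ) (hδ : d * μ + 1 ≤ δ)
    -- the bigrading: `uᵢ ↦ (1,0)`, `x ↦ (0,1)`, `y ↦ (λ,1)`, `z ↦ (μ,1)`
    (w : Fin (n + 1) ⊕ Fin 3 → ℕ × ℕ)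
    (hw : w = Sum.elim (fun _ => (1, 0)) ![(0, 1), (lam, 1), (μ, 1)])
    (a : Fin n → k) :
    ∀ t : MvPolynomial (Fin n ⊕ Fin 2) k,
      ∃ f : MvPolynomial (Fin (n + 1) ⊕ Fin 3) k,
        IsWeightedHomogeneous w f (δ, d) ∧
        Ideal.Quotient.mk
            ((Ideal.span (Set.range (X : Fin n ⊕ Fin 2 → MvPolynomial (Fin n ⊕ Fin 2) k))) ^ 2)
            (aeval
              (Sum.elim
                (fun i : Fin (n + 1) =>
                  Fin.cases 1 (fun j : Fin n => X (Sum.inl j) + C (a j)) i)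
                ![X (Sum.inr 0), X (Sum.inr 1), 1]) f) =
          Ideal.Quotient.mk _ t :=
  second_restriction_map_surjective_on_Gammaz_general δ d hd hlam hδ w hw a
end

section
/- Let k be a field of characteristic 2 and m ≥ 1. Let a, b, c ∈ k[u₁,…,u_m], let g ∈ k[u₁,…,u_m,x,z], let α, γ ∈ k, and set f := α + γz² + z³ + x·(a + b·z + c·z²) + x²·g ∈ k[u₁,…,u_m,x,z]. Then for every point (q, 0, z₀) ∈ kᵐ × k × k (i.e. any point whose x-coordinate is 0), all the partial derivatives ∂f/∂u₁,…,∂f/∂u_m, ∂f/∂x, ∂f/∂z vanish at (q, 0, z₀) if and only if z₀ = 0 and a(q) = 0. (This is the affine-chart content of Lemma 4.7: for the branch divisor f of a degree-1 del Pezzo fibration in characteristic 2, the critical points of f on the locus x = 0 form exactly the set C₂ = (x = z = a = 0).) -/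
open MvPolynomial

/-- Lemma 4.7 (affine chart): over a field of characteristic 2, for
`f = α + γz² + z³ + x(a + bz + cz²) + x²g` in `k[u₁,…,u_m,x,z]`,
a point `(q, 0, z₀)` with vanishing `x`-coordinate is a critical point of `f`
(all partial derivatives vanish) if and only if `z₀ = 0` and `a(q) = 0`. -/
theorem critical_points_on_x_eq_zero_dP1
    {k : Type*} [Field k] [CharP k 2] {m : ℕ} (hm : 1 ≤ m)
    (a b c : MvPolynomial (Fin m) k)
    (g : MvPolynomial (Fin m ⊕ Fin 2) k) (α γ : k)
    (f : MvPolynomial (Fin m ⊕ Fin 2) k)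
    -- variables: `Sum.inl i = uᵢ`, `Sum.inr 0 = x`, `Sum.inr 1 = z`
    (hf : f = C α + C γ * X (Sum.inr 1) ^ 2 + X (Sum.inr 1) ^ 3 +
        X (Sum.inr 0) *
          (rename Sum.inl a + rename Sum.inl b * X (Sum.inr 1) +
            rename Sum.inl c * X (Sum.inr 1) ^ 2) +
        X (Sum.inr 0) ^ 2 * g) :
    ∀ (q : Fin m → k) (z₀ : k),
      (∀ v : Fin m ⊕ Fin 2,
          eval (Sum.elim q ![0, z₀]) (pderiv v f) = 0) ↔
        z₀ = 0 ∧ eval q a = 0 := by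
  intro q z₀
  have h2 : (2 : k) = 0 := by exact_mod_cast CharP.cast_eq_zero k 2
  have hr : ∀ (j : Fin 2) (p : MvPolynomial (Fin m) k),
      pderiv (Sum.inr j) (rename (Sum.inl : Fin m → Fin m ⊕ Fin 2) p) = 0 := by
    intro j p
    apply pderiv_eq_zero_of_notMem_vars
    intro h
    have := vars_rename (Sum.inl : Fin m → Fin m ⊕ Fin 2) p h
    simp at this
  have h01 : (Sum.inr 0 : Fin m ⊕ Fin 2) ≠ Sum.inr 1 := by simp [Fin.ext_iff]
  have h10 : (Sum.inr 1 : Fin m ⊕ Fin 2) ≠ Sum.inr 0 := by simp [Fin.ext_iff]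
  have d1 : eval (Sum.elim q ![0, z₀]) (pderiv (Sum.inr 1) f) =
      γ * (2 * z₀) + 3 * z₀ ^ 2 := by
    simp [hf, pderiv_mul, pderiv_pow, hr, pderiv_X_self, pderiv_X_of_ne h10, eval_rename]
  have d0 : eval (Sum.elim q ![0, z₀]) (pderiv (Sum.inr 0) f) =
      eval q a + eval q b * z₀ + eval q c * z₀ ^ 2 := by
    simp [hf, pderiv_mul, pderiv_pow, hr, pderiv_X_self, pderiv_X_of_ne h01, eval_rename]
  constructor
  · intro h
    have h1 := h (Sum.inr 1); rw [d1] at h1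
    have hsq : z₀ ^ 2 = 0 := by linear_combination h1 - (γ * z₀ + z₀ ^ 2) * h2
    have hz0 : z₀ = 0 := by
      exact pow_eq_zero_iff (two_ne_zero) |>.mp hsq
    have h0 := h (Sum.inr 0); rw [d0, hz0] at h0
    refine ⟨hz0, by simpa using h0⟩
  · rintro ⟨hz0, ha⟩ v
    cases v with
    | inl i =>
      have hX : ∀ j : Fin 2,
          pderiv (Sum.inl i) (X (Sum.inr j) : MvPolynomial (Fin m ⊕ Fin 2) k) = 0 :=
        fun j => pderiv_X_of_ne (by simp)
      simp [hf, pderiv_mul, pderiv_pow, hX, eval_rename]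
    | inr j =>
      fin_cases j
      · show eval (Sum.elim q ![0, z₀]) (pderiv (Sum.inr 0) f) = 0
        rw [d0, hz0, ha]; ring
      · show eval (Sum.elim q ![0, z₀]) (pderiv (Sum.inr 1) f) = 0
        rw [d1, hz0]; ring
end

section
/- Let k be an algebraically closed field and m ≥ 1. Let a ∈ k[u₁,…,u_m] be such that the affine hypersurface a = 0 is nonsingular, i.e. for every q ∈ kᵐ with a(q) = 0 there is an index i with ∂a/∂u_i(q) ≠ 0. Let f ∈ k[u₁,…,u_m,x,y,z] belong to the ideal (x,y,z), and set F := a + f. Then F = 0 has no singular point on the locus x = y = z = 0: for every q ∈ kᵐ with F(q,0,0,0) = 0, some partial derivative of F (with respect to one of u₁,…,u_m, x, y, z) is nonzero at (q,0,0,0). (This is the affine-chart content of the second assertion of Lemma 6.4: the hypersurface X defined by a(u)w³ + f(u,x,y,z) = 0 is nonsingular along X ∖ X° = (x = y = z = 0) provided the hypersurface a = 0 is nonsingular.) -/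
/-!
Both `f` and its derivatives `∂f/∂uᵢ` lie in `(x, y, z)`, so they vanish on `x = y = z = 0`.
There `F` and `∂F/∂uᵢ` therefore restrict to `a` and `∂a/∂uᵢ`, and nonsingularity of `a = 0`
supplies the nonvanishing derivative.
-/

open MvPolynomial

namespace MvPolynomial

variable {σ R : Type*} [CommSemiring R] {S : Set σ} {f : MvPolynomial σ R}

theorem eval_eq_zero_of_mem_span_X {p : σ → R} (hp : ∀ s ∈ S, p s = 0)
    (hf : f ∈ Ideal.span (X '' S)) : eval p f = 0 := by
  have hle : Ideal.span (X '' S) ≤ RingHom.ker (eval p) := by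
    rw [Ideal.span_le]
    rintro _ ⟨s, hs, rfl⟩
    simp [hp s hs]
  exact hle hf

/-- `∂/∂v` kills the generators `X s`, `s ≠ v`, so by the Leibniz rule it preserves their ideal. -/
theorem pderiv_mem_span_X {v : σ} (hv : v ∉ S) (hf : f ∈ Ideal.span (X '' S)) :
    pderiv v f ∈ Ideal.span (X '' S) := by
  induction hf using Submodule.span_induction with
  | mem g hg =>
    obtain ⟨s, hs, rfl⟩ := hg
    rw [pderiv_X_of_ne (ne_of_mem_of_not_mem hs hv)]
    exact zero_mem _
  | zero => simp
  | add g h _ _ hg hh => simpa only [map_add] using add_mem hg hh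
  | smul c g hg hg' =>
    rw [smul_eq_mul, Derivation.leibniz, smul_eq_mul, smul_eq_mul]
    exact add_mem (Ideal.mul_mem_left _ _ hg') (Ideal.mul_mem_right _ _ hg)

end MvPolynomial

theorem nonsingular_along_xyz_eq_zero_general
    {k : Type*} [Field k] {m : ℕ}
    (a : MvPolynomial (Fin m) k)
    (ha : ∀ q : Fin m → k, eval q a = 0 → ∃ i : Fin m, eval q (pderiv i a) ≠ 0)
    (f : MvPolynomial (Fin m ⊕ Fin 3) k)
    -- variables: `Sum.inl i = uᵢ`, `Sum.inr 0 = x`, `Sum.inr 1 = y`, `Sum.inr 2 = z`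
    (hf : f ∈ Ideal.span {(X (Sum.inr 0) : MvPolynomial (Fin m ⊕ Fin 3) k),
        X (Sum.inr 1), X (Sum.inr 2)})
    (F : MvPolynomial (Fin m ⊕ Fin 3) k)
    (hF : F = rename Sum.inl a + f) :
    ∀ q : Fin m → k,
      eval (Sum.elim q ![0, 0, 0]) F = 0 →
      ∃ v : Fin m ⊕ Fin 3, eval (Sum.elim q ![0, 0, 0]) (pderiv v F) ≠ 0 := by
  intro q hq
  set S : Set (Fin m ⊕ Fin 3) := {Sum.inr 0, Sum.inr 1, Sum.inr 2}
  have hfS : f ∈ Ideal.span (X '' S) := by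
    simpa only [S, Set.image_insert_eq, Set.image_singleton] using hf
  have hpt : ∀ s ∈ S, Sum.elim q ![0, 0, 0] s = (0 : k) := by
    rintro s (rfl | rfl | rfl) <;> rfl
  have hf0 := eval_eq_zero_of_mem_span_X hpt hfS
  have ha0 : eval q a = 0 := by simpa [hF, eval_rename, hf0] using hq
  obtain ⟨i, hi⟩ := ha q ha0
  have hfi : eval (Sum.elim q ![0, 0, 0]) (pderiv (Sum.inl i) f) = 0 :=
    eval_eq_zero_of_mem_span_X hpt (pderiv_mem_span_X (by simp [S]) hfS)
  refine ⟨Sum.inl i, ?_⟩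
  simpa [hF, pderiv_rename Sum.inl_injective, eval_rename, hfi] using hi

/-- Lemma 6.4, second assertion (affine chart): if the affine hypersurface
`a = 0` in `kᵐ` is nonsingular and `f ∈ (x,y,z)`, then the hypersurface
`F = a + f = 0` in `k[u₁,…,u_m,x,y,z]` has no singular point on the locus
`x = y = z = 0`. -/
theorem nonsingular_along_xyz_eq_zero
    {k : Type*} [Field k] [IsAlgClosed k] {m : ℕ} (hm : 1 ≤ m)
    (a : MvPolynomial (Fin m) k)
    (ha : ∀ q : Fin m → k, eval q a = 0 → ∃ i : Fin m, eval q (pderiv i a) ≠ 0)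
    (f : MvPolynomial (Fin m ⊕ Fin 3) k)
    -- variables: `Sum.inl i = uᵢ`, `Sum.inr 0 = x`, `Sum.inr 1 = y`, `Sum.inr 2 = z`
    (hf : f ∈ Ideal.span {(X (Sum.inr 0) : MvPolynomial (Fin m ⊕ Fin 3) k),
        X (Sum.inr 1), X (Sum.inr 2)})
    (F : MvPolynomial (Fin m ⊕ Fin 3) k)
    (hF : F = rename Sum.inl a + f) :
    ∀ q : Fin m → k,
      eval (Sum.elim q ![0, 0, 0]) F = 0 →
      ∃ v : Fin m ⊕ Fin 3, eval (Sum.elim q ![0, 0, 0]) (pderiv v F) ≠ 0 :=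
  nonsingular_along_xyz_eq_zero_general a ha f hf F hF
end
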